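/- Let x = (σ,v) be an involution of W(C̃_n) with labelled cycle type (m, k_e, k_o, l). Then x belongs to B̄(B̃_n) if and only if k_e is even. Moreover, if x and x′ are involutions of B̄(B̃_n) and the labelled cycle type of x satisfies k_e > 0 or l > 0, then x and x′ are conjugate in B̄(B̃_n) if and only if they have the same labelled cycle type. -/

import Mathlib

/-!
For an involution `x = (σ, v)` the 2-cycles of `σ` carry equal signs and labels of equal parity
on their two points, so modulo 2 they contribute nothing to `Σx + minus(x)`; a positive fixed
point has label `0` and a negative fixed point `i` contributes `vᵢ + 1`. Hence
`Σx + minus(x) ≡ k_e (mod 2)`.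

Conjugation by `g` transports the cycles of `x` along the underlying permutation of `g`,
preserving signs and label parities at fixed points, so the labelled cycle type is a
conjugacy invariant. Conversely, a bijection matching the 2-cycles and the fixed points of each
kind determines the signed permutation of a conjugator in `W(C̃ₙ)`, and its translation part is
solved for coordinatewise (halving the even label difference at a negative fixed point).
`B̄(B̃ₙ)` is the kernel of the character `w ↦ Σw + minus(w) mod 2`, and a negative fixed point
with even label, or a positive fixed point, of `x` yields an element of the centralizer of `x`
outside it, by which the conjugator can be corrected.
-/

noncomputable section

open Equiv Finset

/-- Points `±1, …, ±n`, encoded as a sign together with an index. -/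
abbrev Pt (n : ℕ) := ℤˣ × Fin n

/-- Negation of a point. -/
def negPt {n : ℕ} (x : Pt n) : Pt n := (-x.1, x.2)

/-- The hyperoctahedral group `H_n` of signed permutations: bijections `σ` of `{±1,…,±n}`
with `σ(-i) = -σ(i)`. -/
def Hgrp (n : ℕ) : Subgroup (Equiv.Perm (Pt n)) where
  carrier := {σ | ∀ x, σ (negPt x) = negPt (σ x)}
  one_mem' := fun _ => rfl
  mul_mem' := by
    intro σ τ hσ hτ x
    have hσ' : ∀ y, σ (negPt y) = negPt (σ y) := hσ
    have hτ' : ∀ y, τ (negPt y) = negPt (τ y) := hτ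
    simp only [Equiv.Perm.mul_apply]
    rw [hτ' x, hσ' (τ x)]
  inv_mem' := by
    intro σ hσ x
    have hσ' : ∀ y, σ (negPt y) = negPt (σ y) := hσ
    apply σ.injective
    rw [hσ']; simp

lemma Hgrp_apply {n : ℕ} {σ : Equiv.Perm (Pt n)} (hσ : σ ∈ Hgrp n) (δ : ℤˣ) (k : Fin n) :
    σ (δ, k) = (δ * (σ (1, k)).1, (σ (1, k)).2) := by
  have hσ' : ∀ y, σ (negPt y) = negPt (σ y) := hσ
  rcases Int.units_eq_one_or δ with h | h <;> subst h
  · simp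
  · have h2 := hσ' (1, k)
    simp only [negPt] at h2
    simpa using h2

/-- The (right) action of a signed permutation on integer vectors:
`(v^σ)_j = ε·v_i` whenever `σ(i) = ε j`. -/
def actV {n : ℕ} (σ : Equiv.Perm (Pt n)) (v : Fin n → ℤ) : Fin n → ℤ :=
  fun j => ((σ (1, j)).1 : ℤ) * v (σ (1, j)).2

lemma actV_add {n : ℕ} (σ : Equiv.Perm (Pt n)) (a b : Fin n → ℤ) :
    actV σ (a + b) = actV σ a + actV σ b := by
  funext j; simp [actV, mul_add]

lemma actV_zero {n : ℕ} (σ : Equiv.Perm (Pt n)) : actV σ 0 = 0 := by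
  funext j; simp [actV]

lemma actV_neg {n : ℕ} (σ : Equiv.Perm (Pt n)) (v : Fin n → ℤ) :
    actV σ (-v) = -actV σ v := by
  funext j; simp [actV]

lemma actV_one {n : ℕ} (v : Fin n → ℤ) : actV 1 v = v := by
  funext j; simp [actV]

lemma actV_mul {n : ℕ} {σ : Equiv.Perm (Pt n)} (hσ : σ ∈ Hgrp n) (τ : Equiv.Perm (Pt n))
    (v : Fin n → ℤ) : actV (σ * τ) v = actV τ (actV σ v) := by
  funext j
  have h := Hgrp_apply hσ (τ (1, j)).1 (τ (1, j)).2
  rw [Prod.mk.eta] at h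
  simp only [actV, Equiv.Perm.mul_apply, h]
  push_cast
  ring

/-- The affine Weyl group of type `C̃ₙ`: pairs `(σ, v)` with `σ` a signed permutation and
`v ∈ ℤⁿ`, with multiplication `(σ,v)(τ,u) = (στ, v^τ + u)`. -/
@[ext] structure WC (n : ℕ) where
  sigma : Hgrp n
  vec : Fin n → ℤ

namespace WC

variable {n : ℕ}

instance : Mul (WC n) :=
  ⟨fun x y => ⟨x.sigma * y.sigma, actV (y.sigma : Equiv.Perm (Pt n)) x.vec + y.vec⟩⟩

instance : One (WC n) := ⟨⟨1, 0⟩⟩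

instance : Inv (WC n) :=
  ⟨fun x => ⟨x.sigma⁻¹, -actV ((x.sigma⁻¹ : Hgrp n) : Equiv.Perm (Pt n)) x.vec⟩⟩

@[simp] lemma mul_sigma (x y : WC n) : (x * y).sigma = x.sigma * y.sigma := rfl
@[simp] lemma mul_vec (x y : WC n) :
    (x * y).vec = actV (y.sigma : Equiv.Perm (Pt n)) x.vec + y.vec := rfl
@[simp] lemma one_sigma : (1 : WC n).sigma = 1 := rfl
@[simp] lemma one_vec : (1 : WC n).vec = 0 := rfl
@[simp] lemma inv_sigma (x : WC n) : (x⁻¹).sigma = x.sigma⁻¹ := rfl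
@[simp] lemma inv_vec (x : WC n) :
    (x⁻¹).vec = -actV ((x.sigma⁻¹ : Hgrp n) : Equiv.Perm (Pt n)) x.vec := rfl

instance : Group (WC n) where
  mul_assoc a b c := by
    refine WC.ext ?_ ?_
    · exact mul_assoc _ _ _
    · show actV (c.sigma : Equiv.Perm (Pt n))
          (actV (b.sigma : Equiv.Perm (Pt n)) a.vec + b.vec) + c.vec
        = actV (((b.sigma * c.sigma : Hgrp n)) : Equiv.Perm (Pt n)) a.vec
          + (actV (c.sigma : Equiv.Perm (Pt n)) b.vec + c.vec)
      rw [actV_add]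
      have hc : (((b.sigma * c.sigma : Hgrp n)) : Equiv.Perm (Pt n))
          = (b.sigma : Equiv.Perm (Pt n)) * (c.sigma : Equiv.Perm (Pt n)) := rfl
      rw [hc, actV_mul b.sigma.2]
      abel
  one_mul a := by
    refine WC.ext (one_mul _) ?_
    show actV (a.sigma : Equiv.Perm (Pt n)) 0 + a.vec = a.vec
    rw [actV_zero, zero_add]
  mul_one a := by
    refine WC.ext (mul_one _) ?_
    show actV ((1 : Hgrp n) : Equiv.Perm (Pt n)) a.vec + 0 = a.vec
    have h1 : ((1 : Hgrp n) : Equiv.Perm (Pt n)) = 1 := rfl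
    rw [h1, actV_one, add_zero]
  inv_mul_cancel a := by
    refine WC.ext (inv_mul_cancel _) ?_
    show actV (a.sigma : Equiv.Perm (Pt n))
        (-actV ((a.sigma⁻¹ : Hgrp n) : Equiv.Perm (Pt n)) a.vec) + a.vec = 0
    rw [actV_neg, ← actV_mul (a.sigma⁻¹ : Hgrp n).2]
    have h1 : ((a.sigma⁻¹ : Hgrp n) : Equiv.Perm (Pt n)) * (a.sigma : Equiv.Perm (Pt n)) = 1 := by
      rw [← Subgroup.coe_mul, inv_mul_cancel, Subgroup.coe_one]
    rw [h1, actV_one, neg_add_cancel]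

end WC

/-- `Σw`: the coordinate sum of the translation part. -/
def sumV {n : ℕ} (x : WC n) : ℤ := ∑ i, x.vec i

/-- `minus(w)`: the number of `i ∈ {1,…,n}` with `σ(i) < 0`. -/
def minusCard {n : ℕ} (x : WC n) : ℕ :=
  (Finset.univ.filter fun i : Fin n => ((x.sigma : Equiv.Perm (Pt n)) (1, i)).1 = -1).card
lemma permOf_bij {n : ℕ} (σ : Hgrp n) :
    Function.Bijective (fun i : Fin n => ((σ : Equiv.Perm (Pt n)) (1, i)).2) := by
  rw [Fintype.bijective_iff_injective_and_card]
  refine ⟨?_, rfl⟩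
  intro i j hij
  simp only at hij
  have hmem : ∀ y, (σ : Equiv.Perm (Pt n)) (negPt y) = negPt ((σ : Equiv.Perm (Pt n)) y) := σ.2
  by_cases h1 : ((σ : Equiv.Perm (Pt n)) (1, i)).1 = ((σ : Equiv.Perm (Pt n)) (1, j)).1
  · have heq : (σ : Equiv.Perm (Pt n)) (1, i) = (σ : Equiv.Perm (Pt n)) (1, j) :=
      Prod.ext h1 hij
    have h2 := (σ : Equiv.Perm (Pt n)).injective heq
    exact congrArg Prod.snd h2
  · exfalso
    have hfst : ((σ : Equiv.Perm (Pt n)) (1, i)).1 = -((σ : Equiv.Perm (Pt n)) (1, j)).1 := by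
      rcases Int.units_eq_one_or ((σ : Equiv.Perm (Pt n)) (1, i)).1 with ha | ha <;>
        rcases Int.units_eq_one_or ((σ : Equiv.Perm (Pt n)) (1, j)).1 with hb | hb <;>
        first
          | exact absurd (ha.trans hb.symm) h1
          | simp [ha, hb]
    have hne : (σ : Equiv.Perm (Pt n)) (1, i) = negPt ((σ : Equiv.Perm (Pt n)) (1, j)) :=
      Prod.ext hfst hij
    rw [← hmem (1, j)] at hne
    have h3 := (σ : Equiv.Perm (Pt n)).injective hne
    have h4 := congrArg Prod.fst h3
    simp only [negPt] at h4
    exact absurd h4 (by decide)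

/-- The underlying (unsigned) permutation of `{1,…,n}` induced by a signed permutation. -/
def permOf {n : ℕ} (σ : Hgrp n) : Equiv.Perm (Fin n) :=
  Equiv.ofBijective _ (permOf_bij σ)

@[simp] lemma permOf_apply {n : ℕ} (σ : Hgrp n) (i : Fin n) :
    permOf σ i = ((σ : Equiv.Perm (Pt n)) (1, i)).2 := rfl

lemma unitsCast_zmod2 (ε : ℤˣ) : (((ε : ℤ) : ZMod 2)) = 1 := by
  rcases Int.units_eq_one_or ε with h | h <;> subst h <;> decide

lemma sumV_mul {n : ℕ} (x y : WC n) :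
    ((sumV (x * y) : ℤ) : ZMod 2) = ((sumV x : ℤ) : ZMod 2) + ((sumV y : ℤ) : ZMod 2) := by
  have key : ∀ (σ : Hgrp n) (v : Fin n → ℤ),
      (∑ i, ((actV (σ : Equiv.Perm (Pt n)) v i : ℤ) : ZMod 2)) = ∑ i, ((v i : ℤ) : ZMod 2) := by
    intro σ v
    have hterm : ∀ i, ((actV (σ : Equiv.Perm (Pt n)) v i : ℤ) : ZMod 2)
        = ((v (permOf σ i) : ℤ) : ZMod 2) := by
      intro i
      show ((((((σ : Equiv.Perm (Pt n)) (1, i)).1 : ℤ)) * v (((σ : Equiv.Perm (Pt n)) (1, i)).2) : ℤ) : ZMod 2) = _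
      push_cast
      rw [unitsCast_zmod2, one_mul]
      rfl
    rw [Finset.sum_congr rfl (fun i _ => hterm i)]
    exact Equiv.sum_comp (permOf σ) (fun i => ((v i : ℤ) : ZMod 2))
  have hvec : (x * y).vec = actV (y.sigma : Equiv.Perm (Pt n)) x.vec + y.vec := rfl
  unfold sumV
  rw [hvec]
  have hsplit : (∑ i, (actV (y.sigma : Equiv.Perm (Pt n)) x.vec + y.vec) i)
      = (∑ i, actV (y.sigma : Equiv.Perm (Pt n)) x.vec i) + ∑ i, y.vec i := by
    rw [← Finset.sum_add_distrib]; rfl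
  rw [hsplit]
  push_cast
  rw [key y.sigma x.vec]

lemma minusCard_one {n : ℕ} : minusCard (1 : WC n) = 0 := by
  unfold minusCard
  rw [Finset.card_eq_zero, Finset.filter_eq_empty_iff]
  intro i _
  show ¬ (((1 : Hgrp n) : Equiv.Perm (Pt n)) (1, i)).1 = -1
  simp only [OneMemClass.coe_one, Equiv.Perm.one_apply]
  decide

lemma ite_units_mul (u w : ℤˣ) :
    ((if u * w = -1 then (1 : ZMod 2) else 0)) =
      (if u = -1 then (1 : ZMod 2) else 0) + (if w = -1 then (1 : ZMod 2) else 0) := by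
  rcases Int.units_eq_one_or u with h | h <;> rcases Int.units_eq_one_or w with h' | h' <;>
    subst h <;> subst h' <;> decide

lemma minusCard_mul {n : ℕ} (x y : WC n) :
    ((minusCard (x * y) : ℕ) : ZMod 2) = (minusCard x : ZMod 2) + (minusCard y : ZMod 2) := by
  have hσ : ∀ i : Fin n, ((x * y).sigma : Equiv.Perm (Pt n)) (1, i)
      = (x.sigma : Equiv.Perm (Pt n)) ((y.sigma : Equiv.Perm (Pt n)) (1, i)) := fun i => rfl
  unfold minusCard
  rw [Finset.card_filter, Finset.card_filter, Finset.card_filter]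
  push_cast
  have step : ∀ i : Fin n,
      ((if (((x * y).sigma : Equiv.Perm (Pt n)) (1, i)).1 = -1 then (1 : ZMod 2) else 0))
      = (if ((y.sigma : Equiv.Perm (Pt n)) (1, i)).1 = -1 then (1 : ZMod 2) else 0)
        + (if ((x.sigma : Equiv.Perm (Pt n)) (1, permOf y.sigma i)).1 = -1
            then (1 : ZMod 2) else 0) := by
    intro i
    rw [hσ i]
    have h := Hgrp_apply x.sigma.2 ((y.sigma : Equiv.Perm (Pt n)) (1, i)).1
      ((y.sigma : Equiv.Perm (Pt n)) (1, i)).2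
    rw [Prod.mk.eta] at h
    rw [h]
    exact ite_units_mul _ _
  calc (∑ i : Fin n, if (((x * y).sigma : Equiv.Perm (Pt n)) (1, i)).1 = -1
          then (1 : ZMod 2) else 0)
      = ∑ i : Fin n, ((if ((y.sigma : Equiv.Perm (Pt n)) (1, i)).1 = -1 then (1 : ZMod 2) else 0)
        + (if ((x.sigma : Equiv.Perm (Pt n)) (1, permOf y.sigma i)).1 = -1
            then (1 : ZMod 2) else 0)) := Finset.sum_congr rfl (fun i _ => step i)
    _ = (∑ i : Fin n, if ((y.sigma : Equiv.Perm (Pt n)) (1, i)).1 = -1 then (1 : ZMod 2) else 0)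
        + ∑ i : Fin n, (if ((x.sigma : Equiv.Perm (Pt n)) (1, permOf y.sigma i)).1 = -1
            then (1 : ZMod 2) else 0) := Finset.sum_add_distrib
    _ = (∑ i : Fin n, if ((x.sigma : Equiv.Perm (Pt n)) (1, i)).1 = -1 then (1 : ZMod 2) else 0)
        + ∑ i : Fin n, (if ((y.sigma : Equiv.Perm (Pt n)) (1, i)).1 = -1
            then (1 : ZMod 2) else 0) := by
          rw [add_comm]
          congr 1
          exact Equiv.sum_comp (permOf y.sigma)
            (fun k => if ((x.sigma : Equiv.Perm (Pt n)) (1, k)).1 = -1 then (1 : ZMod 2) else 0)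
lemma even_int_iff_zmod {a : ℤ} : Even a ↔ ((a : ZMod 2) = 0) := by
  rw [ZMod.intCast_zmod_eq_zero_iff_dvd a 2, Int.even_iff]
  push_cast
  omega

lemma sumV_one {n : ℕ} : sumV (1 : WC n) = 0 := by simp [sumV]

/-- The affine Weyl group of type `B̃ₙ`: the elements `w` of `W(C̃ₙ)` with `Σw` even. -/
def WB (n : ℕ) : Subgroup (WC n) where
  carrier := {w | Even (sumV w)}
  one_mem' := by
    show Even (sumV (1 : WC n))
    rw [sumV_one]
    exact Even.zero
  mul_mem' := by
    intro a b ha hb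
    have ha' : ((sumV a : ℤ) : ZMod 2) = 0 := even_int_iff_zmod.mp ha
    have hb' : ((sumV b : ℤ) : ZMod 2) = 0 := even_int_iff_zmod.mp hb
    refine even_int_iff_zmod.mpr ?_
    rw [sumV_mul, ha', hb', add_zero]
  inv_mem' := by
    intro a ha
    have ha' : ((sumV a : ℤ) : ZMod 2) = 0 := even_int_iff_zmod.mp ha
    refine even_int_iff_zmod.mpr ?_
    have h1 := sumV_mul a⁻¹ a
    rw [inv_mul_cancel, sumV_one, ha', add_zero] at h1
    simpa using h1.symm

lemma intModEq_two_iff {a b : ℤ} : a ≡ b [ZMOD 2] ↔ ((a : ZMod 2) = (b : ZMod 2)) :=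
  (ZMod.intCast_eq_intCast_iff a b 2).symm

/-- The second copy `B̄(B̃ₙ)` of the affine Weyl group of type `B̃ₙ` inside `W(C̃ₙ)`:
elements with `Σw ≡ minus(w) (mod 2)`. -/
def Bbar (n : ℕ) : Subgroup (WC n) where
  carrier := {w | sumV w ≡ (minusCard w : ℤ) [ZMOD 2]}
  one_mem' := by
    show sumV (1 : WC n) ≡ ((minusCard (1 : WC n) : ℤ)) [ZMOD 2]
    rw [sumV_one, minusCard_one]
    rfl
  mul_mem' := by
    intro a b ha hb
    have ha' := intModEq_two_iff.mp ha
    have hb' := intModEq_two_iff.mp hb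
    refine intModEq_two_iff.mpr ?_
    rw [sumV_mul, ha', hb']
    push_cast at ha' hb' ⊢
    rw [minusCard_mul]
  inv_mem' := by
    intro a ha
    have ha' := intModEq_two_iff.mp ha
    refine intModEq_two_iff.mpr ?_
    have h1 := sumV_mul a⁻¹ a
    have h2 := minusCard_mul a⁻¹ a
    rw [inv_mul_cancel, sumV_one] at h1
    rw [inv_mul_cancel, minusCard_one] at h2
    push_cast at ha' h1 h2 ⊢
    linear_combination h1.symm - h2.symm - ha'

/-- The affine Weyl group of type `D̃ₙ`, as the intersection of the two `B̃ₙ`'s. -/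
def WD (n : ℕ) : Subgroup (WC n) := WB n ⊓ Bbar n

instance : DecidablePred (fun k : ℤ => Even k) := fun _ => decidable_of_iff _ Int.even_iff.symm
instance : DecidablePred (fun k : ℤ => Odd k) := fun _ => decidable_of_iff _ Int.odd_iff.symm

/-- The labelled cycle type `(m, k_e, k_o, l)` of an element of `W(C̃ₙ)` (intended for
involutions): `m` is the number of 2-cycles of `σ`, `k_e` (resp. `k_o`) is the number of
`i` with `σ(i) = -i` whose label `v_i` is even (resp. odd), and `l` is the number of fixed
points of `σ`. -/
def lct {n : ℕ} (x : WC n) : ℕ × ℕ × ℕ × ℕ :=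
  ((Finset.univ.filter fun i : Fin n => ((x.sigma : Equiv.Perm (Pt n)) (1, i)).2 ≠ i).card / 2,
   (Finset.univ.filter fun i : Fin n =>
      (x.sigma : Equiv.Perm (Pt n)) (1, i) = (-1, i) ∧ Even (x.vec i)).card,
   (Finset.univ.filter fun i : Fin n =>
      (x.sigma : Equiv.Perm (Pt n)) (1, i) = (-1, i) ∧ Odd (x.vec i)).card,
   (Finset.univ.filter fun i : Fin n => (x.sigma : Equiv.Perm (Pt n)) (1, i) = (1, i)).card)

/-- `f(x)`: twice the sum of the labels over one chosen entry of each 2-cycle (we choose the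
entry with the smaller index), plus the sum of the labels over the negative 1-cycles.  Only
its residue modulo 4 is ever used, and for involutions that residue does not depend on the
choice of entries. -/
def fval {n : ℕ} (x : WC n) : ℤ :=
  2 * (∑ i ∈ Finset.univ.filter
        (fun i : Fin n => i < ((x.sigma : Equiv.Perm (Pt n)) (1, i)).2), x.vec i)
  + ∑ i ∈ Finset.univ.filter
      (fun i : Fin n => (x.sigma : Equiv.Perm (Pt n)) (1, i) = (-1, i)), x.vec i

/-- The commuting graph on a set `X` of elements of a group: vertices are the elements
of `X`, and distinct vertices are adjacent exactly when they commute.  When `X` is a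
conjugacy class of involutions this is the commuting involution graph `C(G,X)`. -/
def commGraph {M : Type*} [Group M] (X : Set M) : SimpleGraph X where
  Adj a b := a ≠ b ∧ (a : M) * (b : M) = (b : M) * (a : M)
  symm := ⟨fun a b h => ⟨h.1.symm, h.2.symm⟩⟩
  loopless := ⟨fun a h => h.1 rfl⟩

/-- The conjugacy class of `x` under conjugation by a subgroup `G`. -/
def ConjugacyClassOf {M : Type*} [Group M] (G : Subgroup M) (x : M) : Set M :=
  {y | ∃ g ∈ G, g⁻¹ * x * g = y}

/-- `X` is a conjugacy class of involutions of the subgroup `G`. -/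
def IsInvolutionConjClass {M : Type*} [Group M] (G : Subgroup M) (X : Set M) : Prop :=
  ∃ x ∈ G, orderOf x = 2 ∧ X = ConjugacyClassOf G x

/-- Sign change at the single coordinate `k`. -/
def negAt {n : ℕ} (k : Fin n) : Equiv.Perm (Pt n) :=
  Function.Involutive.toPerm (fun p => if p.2 = k then (-p.1, p.2) else p) (by
    intro p
    by_cases h : p.2 = k <;> simp [h, Prod.ext_iff])

lemma negAt_mem {n : ℕ} (k : Fin n) : negAt k ∈ Hgrp n := by
  intro p
  show (if (negPt p).2 = k then (-(negPt p).1, (negPt p).2) else negPt p)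
      = negPt (if p.2 = k then (-p.1, p.2) else p)
  by_cases h : p.2 = k <;> simp [negPt, h]

/-- The positive transposition of the coordinates `a` and `b`. -/
def swapPos {n : ℕ} (a b : Fin n) : Equiv.Perm (Pt n) :=
  Equiv.prodCongr (Equiv.refl ℤˣ) (Equiv.swap a b)

lemma swapPos_mem {n : ℕ} (a b : Fin n) : swapPos a b ∈ Hgrp n := fun _ => rfl

/-- The negative transposition of the coordinates `a` and `b` (for `a ≠ b` it sends
`a ↦ -b` and `b ↦ -a`). -/
def negSwap {n : ℕ} (a b : Fin n) : Equiv.Perm (Pt n) := negAt b * negAt a * swapPos a b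

lemma negSwap_mem {n : ℕ} (a b : Fin n) : negSwap a b ∈ Hgrp n :=
  mul_mem (mul_mem (negAt_mem b) (negAt_mem a)) (swapPos_mem a b)

/-- Constructor for elements of `W(C̃ₙ)`. -/
def mkW {n : ℕ} (σ : Equiv.Perm (Pt n)) (h : σ ∈ Hgrp n) (v : Fin n → ℤ) : WC n := ⟨⟨σ, h⟩, v⟩

/-- The simple reflection `r₁ = (σ, 0)` with `σ(1) = -1` (take `k = 0`); more generally
`(σ, 0)` with `σ(k) = -k`. -/
def rFirstGen (n : ℕ) (k : Fin n) : WC n := mkW (negAt k) (negAt_mem k) 0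

/-- The simple reflections `rᵢ = (σ, 0)`, `2 ≤ i ≤ n`, where `σ` exchanges `a` and `b`
positively (take `a, b` adjacent). -/
def swapGen (n : ℕ) (a b : Fin n) : WC n := mkW (swapPos a b) (swapPos_mem a b) 0

/-- The simple reflection `r_{n+1} = (σ, eₙ)` with `σ(n) = -n` (take `k = n-1`). -/
def rLastGen (n : ℕ) (k : Fin n) : WC n := mkW (negAt k) (negAt_mem k) (Pi.single k 1)

/-- The reflections `s = (σ, e_{n-1} + eₙ)` (take `a = n-2`, `b = n-1`) and
`t = (σ, e₁ + e₂)` (take `a = 0`, `b = 1`), where `σ(a) = -b`, `σ(b) = -a`. -/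
def negSwapGen (n : ℕ) (a b : Fin n) : WC n :=
  mkW (negSwap a b) (negSwap_mem a b) (Pi.single a 1 + Pi.single b 1)

/-- The projection `π : W(C̃ₙ) → Hₙ`, `(σ, v) ↦ σ`. -/
def projHom (n : ℕ) : WC n →* Equiv.Perm (Pt n) where
  toFun x := (x.sigma : Equiv.Perm (Pt n))
  map_one' := rfl
  map_mul' _ _ := rfl

/-- The action of a signed permutation on real vectors. -/
def actR {n : ℕ} (σ : Equiv.Perm (Pt n)) (u : Fin n → ℝ) : Fin n → ℝ :=
  fun j => (((σ (1, j)).1 : ℤ) : ℝ) * u (σ (1, j)).2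

/-- The affine action of `w = (σ,v) ∈ W(C̃ₙ)` on `ℝⁿ`: `u ↦ u^σ + v`. -/
def affAct {n : ℕ} (x : WC n) : (Fin n → ℝ) → (Fin n → ℝ) :=
  fun u => actR (x.sigma : Equiv.Perm (Pt n)) u + fun i => ((x.vec i : ℤ) : ℝ)

/-- The affine involution `φ` of `ℝⁿ` with `φ(u)ᵢ = 1/2 - u_{n+1-i}`. -/
def phiR (n : ℕ) : (Fin n → ℝ) → (Fin n → ℝ) := fun u i => 1 / 2 - u i.rev

theorem Finset.sum_eq_sum_filter_fixed_of_involutive {α R : Type*} [Fintype α] [DecidableEq α]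
    [Ring R] [CharP R 2] {p : α → α} (hp : Function.Involutive p) {f : α → R}
    (hf : ∀ a, f (p a) = f a) : ∑ a, f a = ∑ a with p a = a, f a := by
  rw [← Finset.sum_filter_add_sum_filter_not univ (fun a => p a = a), add_eq_left]
  refine Finset.sum_involution (fun a _ => p a) (fun a _ => by rw [hf, CharTwo.add_self_eq_zero])
    (fun a ha _ => (Finset.mem_filter.1 ha).2) (fun a ha => ?_) (fun a _ => hp a)
  simpa [hp a, eq_comm] using ha

theorem Equiv.exists_comp_eq_of_card_fiber_eq {α β γ : Type*} [Fintype α] [Fintype β]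
    [DecidableEq γ] {f : α → γ} {g : β → γ} (h : ∀ c, #{a | f a = c} = #{b | g b = c}) :
    ∃ e : α ≃ β, ∀ a, g (e a) = f a :=
  ⟨Equiv.ofFiberEquiv fun c => Fintype.equivOfCardEq (by
    rw [Fintype.card_subtype, Fintype.card_subtype, h]), Equiv.ofFiberEquiv_map _⟩

theorem MonoidHom.exists_mem_ker_conj_eq {G : Type*} [Group G] (χ : G →* Multiplicative (ZMod 2))
    {x y g h : G} (hg : g⁻¹ * x * g = y) (hh : Commute h x) (hχ : χ h ≠ 1) :
    ∃ g' ∈ χ.ker, g'⁻¹ * x * g' = y := by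
  by_cases hg1 : χ g = 1
  · exact ⟨g, hg1, hg⟩
  refine ⟨h * g, ?_, ?_⟩
  · rw [MonoidHom.mem_ker, map_mul]
    generalize χ h = a at hχ
    generalize χ g = b at hg1
    revert a b
    decide
  · have hx : h⁻¹ * x * h = x := by rw [mul_assoc, ← hh.eq, inv_mul_cancel_left]
    calc (h * g)⁻¹ * x * (h * g) = g⁻¹ * (h⁻¹ * x * h) * g := by group
      _ = y := by rw [hx, hg]

theorem mul_self_eq_one_of_orderOf_eq_two {M : Type*} [Monoid M] {x : M} (h : orderOf x = 2) :
    x * x = 1 := by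
  rw [← sq, ← h, pow_orderOf_eq_one]

namespace WC

variable {n : ℕ}

def sign (x : WC n) (i : Fin n) : ℤˣ := ((x.sigma : Equiv.Perm (Pt n)) (1, i)).1

def perm (x : WC n) : Equiv.Perm (Fin n) := permOf x.sigma

lemma sigma_one_apply (x : WC n) (i : Fin n) :
    (x.sigma : Equiv.Perm (Pt n)) (1, i) = (sign x i, perm x i) := rfl

lemma sigma_apply (x : WC n) (ε : ℤˣ) (i : Fin n) :
    (x.sigma : Equiv.Perm (Pt n)) (ε, i) = (ε * sign x i, perm x i) :=
  Hgrp_apply x.sigma.2 ε i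

lemma sign_mul (x y : WC n) (i : Fin n) : sign (x * y) i = sign y i * sign x (perm y i) := by
  change ((x.sigma : Equiv.Perm (Pt n)) ((y.sigma : Equiv.Perm (Pt n)) (1, i))).1 = _
  rw [sigma_one_apply, sigma_apply]

lemma perm_mul (x y : WC n) : perm (x * y) = perm x * perm y := by
  ext i
  change (((x.sigma : Equiv.Perm (Pt n)) ((y.sigma : Equiv.Perm (Pt n)) (1, i))).2 : ℕ) = _
  rw [sigma_one_apply, sigma_apply]
  rfl

lemma vec_mul_apply (x y : WC n) (i : Fin n) :
    (x * y).vec i = sign y i * x.vec (perm y i) + y.vec i := rfl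

@[simp] lemma sign_one (i : Fin n) : sign (1 : WC n) i = 1 := rfl

@[simp] lemma perm_one : perm (1 : WC n) = 1 := Equiv.ext fun _ => rfl

def AgreeAt (a b : WC n) (i : Fin n) : Prop :=
  sign a i = sign b i ∧ perm a i = perm b i ∧ a.vec i = b.vec i

lemma AgreeAt.symm {a b : WC n} {i : Fin n} (h : AgreeAt a b i) : AgreeAt b a i :=
  ⟨h.1.symm, h.2.1.symm, h.2.2.symm⟩

lemma eq_of_forall_agreeAt {a b : WC n} (h : ∀ i, AgreeAt a b i) : a = b := by
  refine WC.ext (Subtype.ext <| Equiv.ext fun ⟨ε, i⟩ => ?_) (funext fun i => (h i).2.2)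
  rw [sigma_apply, sigma_apply, (h i).1, (h i).2.1]

lemma AgreeAt.mul_mul {a b : WC n} (x y : WC n) {i : Fin n} (h : AgreeAt a b (perm y i)) :
    AgreeAt (x * a * y) (x * b * y) i := by
  obtain ⟨hs, hp, hv⟩ := h
  refine ⟨?_, ?_, ?_⟩ <;>
    simp only [sign_mul, perm_mul, Equiv.Perm.mul_apply, vec_mul_apply, hs, hp, hv]

section Involution

variable {x : WC n}

lemma perm_perm (hx : x * x = 1) (i : Fin n) : perm x (perm x i) = i := by
  rw [← Equiv.Perm.mul_apply, ← perm_mul, hx, perm_one, Equiv.Perm.one_apply]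

lemma sign_perm (hx : x * x = 1) (i : Fin n) : sign x (perm x i) = sign x i := by
  have h := sign_mul x x i
  rw [hx, sign_one] at h
  calc sign x (perm x i) = sign x i * sign x i * sign x (perm x i) := by
        rw [Int.units_mul_self, one_mul]
    _ = sign x i := by rw [mul_assoc, ← h, mul_one]

lemma vec_perm (hx : x * x = 1) (i : Fin n) : x.vec (perm x i) = -(sign x i * x.vec i) := by
  have h : 0 = sign x i * x.vec (perm x i) + x.vec i := by rw [← vec_mul_apply, hx]; rfl
  linear_combination -(sign x i : ℤ) * h - x.vec (perm x i) * Int.units_coe_mul_self (sign x i)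

lemma vec_eq_zero_of_fixed (hx : x * x = 1) {i : Fin n} (hp : perm x i = i)
    (hs : sign x i = 1) : x.vec i = 0 := by
  have h := vec_perm hx i
  rw [hp, hs, Units.val_one, one_mul] at h
  omega

end Involution

def parity : WC n →* Multiplicative (ZMod 2) where
  toFun x := .ofAdd ((sumV x : ZMod 2) + (minusCard x : ZMod 2))
  map_one' := by simp [sumV_one, minusCard_one]
  map_mul' x y := by
    rw [← ofAdd_add, sumV_mul, minusCard_mul]
    ring_nf

lemma mem_Bbar_iff_parity (x : WC n) : x ∈ Bbar n ↔ parity x = 1 := by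
  change sumV x ≡ (minusCard x : ℤ) [ZMOD 2] ↔ _
  rw [intModEq_two_iff, parity, MonoidHom.coe_mk, OneHom.coe_mk, ofAdd_eq_one, Int.cast_natCast,
    ← sub_eq_zero, sub_eq_add_neg, ZMod.neg_eq_self_mod_two]

lemma Bbar_eq_ker : Bbar n = (parity : WC n →* Multiplicative (ZMod 2)).ker :=
  SetLike.ext mem_Bbar_iff_parity

def indexParity (x : WC n) (i : Fin n) : ZMod 2 := x.vec i + if sign x i = -1 then 1 else 0

lemma parity_eq_ofAdd_sum (x : WC n) : parity x = .ofAdd (∑ i, indexParity x i) := by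
  simp only [parity, MonoidHom.coe_mk, OneHom.coe_mk, indexParity, sumV, minusCard,
    Finset.sum_add_distrib, Int.cast_sum, Finset.natCast_card_filter]
  rfl

section Involution

variable {x : WC n}

lemma indexParity_perm (hx : x * x = 1) (i : Fin n) :
    indexParity x (perm x i) = indexParity x i := by
  rw [indexParity, indexParity, vec_perm hx, sign_perm hx]
  push_cast
  rw [unitsCast_zmod2, one_mul, ZMod.neg_eq_self_mod_two]

lemma indexParity_of_fixed (hx : x * x = 1) {i : Fin n} (hp : perm x i = i) :
    indexParity x i = if sign x i = -1 ∧ Even (x.vec i) then 1 else 0 := by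
  rcases Int.units_eq_one_or (sign x i) with hs | hs
  · simp [indexParity, vec_eq_zero_of_fixed hx hp hs, hs]
  · by_cases he : Even (x.vec i)
    · simp [indexParity, hs, he, ZMod.intCast_eq_zero_iff_even.2 he]
    · simp [indexParity, hs, he, ZMod.intCast_eq_one_iff_odd.2 (Int.not_even_iff_odd.1 he)]
      decide

theorem parity_of_involution (hx : x * x = 1) : parity x = .ofAdd ((lct x).2.1 : ZMod 2) := by
  rw [parity_eq_ofAdd_sum,
    Finset.sum_eq_sum_filter_fixed_of_involutive (perm_perm hx) (indexParity_perm hx),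
    Finset.sum_congr rfl fun i hi => indexParity_of_fixed hx (Finset.mem_filter.1 hi).2,
    Finset.sum_boole, Finset.filter_filter]
  simp only [lct]
  congr 3
  ext i
  simp only [Finset.mem_filter, sigma_one_apply, Prod.mk.injEq]
  tauto

theorem mem_Bbar_iff_even (hx : x * x = 1) : x ∈ Bbar n ↔ Even (lct x).2.1 := by
  rw [mem_Bbar_iff_parity, parity_of_involution hx, ofAdd_eq_one, ZMod.natCast_eq_zero_iff_even]

end Involution

def signedPerm (δ : Fin n → ℤˣ) (b : Equiv.Perm (Fin n)) : Hgrp n :=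
  ⟨{ toFun := fun p => (p.1 * δ p.2, b p.2)
     invFun := fun p => (p.1 * δ (b.symm p.2), b.symm p.2)
     left_inv := fun p => by simp [mul_assoc, Int.units_mul_self]
     right_inv := fun p => by simp [mul_assoc, Int.units_mul_self] },
   fun p => by simp [negPt]⟩

@[simp] lemma sign_mk (δ : Fin n → ℤˣ) (b : Equiv.Perm (Fin n)) (t : Fin n → ℤ) (i : Fin n) :
    sign ⟨signedPerm δ b, t⟩ i = δ i := one_mul _

@[simp] lemma perm_mk (δ : Fin n → ℤˣ) (b : Equiv.Perm (Fin n)) (t : Fin n → ℤ) :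
    perm ⟨signedPerm δ b, t⟩ = b := Equiv.ext fun _ => rfl

def single (i : Fin n) (ε : ℤˣ) (a : ℤ) : WC n := ⟨signedPerm (Pi.mulSingle i ε) 1, Pi.single i a⟩

lemma commute_single {x : WC n} {i : Fin n} (hp : perm x i = i) {ε : ℤˣ} {a : ℤ}
    (h : ε * x.vec i + a = sign x i * a + x.vec i) : Commute (single i ε a) x := by
  refine eq_of_forall_agreeAt fun j => ?_
  by_cases hj : j = i
  · subst hj
    refine ⟨?_, ?_, ?_⟩ <;> simp [single, sign_mul, perm_mul, vec_mul_apply, hp, mul_comm, h]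
  · have hpj : perm x j ≠ i := fun hc => hj (by rw [← hp] at hc; exact (perm x).injective hc)
    refine ⟨?_, ?_, ?_⟩ <;> simp [single, sign_mul, perm_mul, vec_mul_apply, hj, hpj]

lemma parity_single (i : Fin n) (ε : ℤˣ) (a : ℤ) :
    parity (single i ε a) = .ofAdd ((a : ZMod 2) + if ε = -1 then 1 else 0) := by
  rw [parity_eq_ofAdd_sum, Fintype.sum_eq_single i fun j hj => by simp [indexParity, single, hj]]
  simp [indexParity, single]

theorem exists_commute_parity_ne_one {x : WC n}
    (hfix : 0 < (lct x).2.1 ∨ 0 < (lct x).2.2.2) :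
    ∃ h : WC n, Commute h x ∧ parity h ≠ 1 := by
  simp only [lct] at hfix
  rcases hfix with hke | hl
  · obtain ⟨i, hi⟩ := Finset.card_pos.1 hke
    simp only [Finset.mem_filter, Finset.mem_univ, true_and, sigma_one_apply,
      Prod.mk.injEq] at hi
    obtain ⟨⟨hs, hp⟩, he⟩ := hi
    refine ⟨single i (-1) (x.vec i), commute_single hp (by rw [hs]), ?_⟩
    rw [parity_single, ZMod.intCast_eq_zero_iff_even.2 he]
    decide
  · obtain ⟨i, hi⟩ := Finset.card_pos.1 hl
    simp only [Finset.mem_filter, Finset.mem_univ, true_and, sigma_one_apply,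
      Prod.mk.injEq] at hi
    refine ⟨single i 1 1, commute_single hi.2 (by rw [hi.1]; push_cast; ring), ?_⟩
    rw [parity_single]
    decide

def fixedLabel (x : WC n) (i : Fin n) : Option (ℤˣ × ZMod 2) :=
  if perm x i = i then some (sign x i, x.vec i) else none

lemma fixedLabel_eq_none_iff {x : WC n} {i : Fin n} : fixedLabel x i = none ↔ perm x i ≠ i := by
  unfold fixedLabel
  split_ifs <;> simp_all

lemma fixedLabel_eq_some_iff {x : WC n} {i : Fin n} {ε : ℤˣ} {p : ZMod 2} :
    fixedLabel x i = some (ε, p) ↔ perm x i = i ∧ sign x i = ε ∧ (x.vec i : ZMod 2) = p := by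
  unfold fixedLabel
  split_ifs <;> simp_all

lemma lct_eq_card_fixedLabel {x : WC n} (hx : x * x = 1) :
    lct x = (#{i | fixedLabel x i = none} / 2, #{i | fixedLabel x i = some (-1, 0)},
      #{i | fixedLabel x i = some (-1, 1)}, #{i | fixedLabel x i = some (1, 0)}) := by
  simp only [lct, fixedLabel_eq_none_iff, fixedLabel_eq_some_iff, sigma_one_apply, Prod.mk.injEq,
    ZMod.intCast_eq_zero_iff_even, ZMod.intCast_eq_one_iff_odd]
  refine ⟨rfl, ?_, ?_, ?_⟩ <;> congr 1 <;> ext i <;>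
    simp only [Finset.mem_filter, Finset.mem_univ, true_and]
  · tauto
  · tauto
  · exact ⟨fun ⟨hs, hp⟩ => ⟨hp, hs, by simp [vec_eq_zero_of_fixed hx hp hs]⟩,
      fun ⟨hp, hs, _⟩ => ⟨hs, hp⟩⟩

lemma fixedLabel_perm_of_mul_eq_mul {x y g : WC n} (h : x * g = g * y) (i : Fin n) :
    fixedLabel x (perm g i) = fixedLabel y i := by
  have hs := congrArg (sign · i) h
  have hp := congrArg (perm · i) h
  have hv := congrFun (congrArg WC.vec h) i
  simp only [sign_mul, perm_mul, Equiv.Perm.mul_apply, vec_mul_apply] at hs hp hv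
  by_cases hy : perm y i = i
  · have hx : perm x (perm g i) = perm g i := by rw [hp, hy]
    rw [hy] at hs hv
    simp only [fixedLabel, if_pos hx, if_pos hy, Option.some.injEq, Prod.mk.injEq]
    refine ⟨mul_left_cancel (hs.trans (mul_comm _ _)), ?_⟩
    have hv2 := congrArg (Int.cast : ℤ → ZMod 2) hv
    push_cast [unitsCast_zmod2] at hv2
    linear_combination hv2
  · have hx : perm x (perm g i) ≠ perm g i := by
      rw [hp]
      exact fun hc => hy ((perm g).injective hc)
    simp [fixedLabel, hx, hy]

theorem lct_eq_of_mul_eq_mul {x y g : WC n} (hx : x * x = 1) (hy : y * y = 1)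
    (h : x * g = g * y) : lct y = lct x := by
  have hcard : ∀ k, #{i | fixedLabel y i = k} = #{i | fixedLabel x i = k} := fun k =>
    Finset.card_equiv (perm g) (by simp [fixedLabel_perm_of_mul_eq_mul h])
  rw [lct_eq_card_fixedLabel hx, lct_eq_card_fixedLabel hy]
  simp only [hcard]

section Involution

variable {x : WC n}

lemma card_perm_lt_eq (hx : x * x = 1) : #{i | perm x i < i} = #{i | i < perm x i} :=
  Finset.card_equiv (perm x) (by simp [perm_perm hx])

lemma card_fixedLabel_none (hx : x * x = 1) :
    #{i | fixedLabel x i = none} = 2 * #{i | i < perm x i} := by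
  simp only [fixedLabel_eq_none_iff, ne_iff_lt_or_gt, Finset.filter_or]
  rw [Finset.card_union_of_disjoint (Finset.disjoint_filter.2 fun i _ h => (lt_asymm h)),
    card_perm_lt_eq hx, two_mul]

lemma card_fixedLabel_one_one (hx : x * x = 1) : #{i | fixedLabel x i = some (1, 1)} = 0 := by
  simp only [Finset.card_eq_zero, Finset.filter_eq_empty_iff, fixedLabel_eq_some_iff]
  rintro i - ⟨hp, hs, hv⟩
  simp [vec_eq_zero_of_fixed hx hp hs] at hv

end Involution

lemma card_fixedLabel_eq_of_lct_eq {x y : WC n} (hx : x * x = 1) (hy : y * y = 1)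
    (h : lct x = lct y) (k : Option (ℤˣ × ZMod 2)) :
    #{i | fixedLabel x i = k} = #{i | fixedLabel y i = k} := by
  rw [lct_eq_card_fixedLabel hx, lct_eq_card_fixedLabel hy] at h
  simp only [Prod.mk.injEq] at h
  obtain ⟨hm, hke, hko, hl⟩ := h
  rcases k with _ | ⟨ε, p⟩
  · rw [card_fixedLabel_none hx, card_fixedLabel_none hy] at hm ⊢
    omega
  · rcases Int.units_eq_one_or ε with rfl | rfl <;>
      rcases (by decide : ∀ q : ZMod 2, q = 0 ∨ q = 1) p with rfl | rfl
    · exact hl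
    · rw [card_fixedLabel_one_one hx, card_fixedLabel_one_one hy]
    · exact hke
    · exact hko

/-- Marking the larger point of each 2-cycle lets a label-preserving bijection match 2-cycles of
one involution with 2-cycles of another. -/
def orientedLabel (x : WC n) (i : Fin n) : Option (Option (ℤˣ × ZMod 2)) :=
  if perm x i < i then none else some (fixedLabel x i)

lemma card_orientedLabel_none {x : WC n} (hx : x * x = 1) :
    #{i | orientedLabel x i = none} = #{i | i < perm x i} := by
  rw [← card_perm_lt_eq hx]
  refine Finset.card_equiv (.refl _) fun i => ?_
  simp [orientedLabel]

lemma card_orientedLabel_some_none (x : WC n) :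
    #{i | orientedLabel x i = some none} = #{i | i < perm x i} := by
  refine Finset.card_equiv (.refl _) fun i => ?_
  rw [Finset.mem_filter, Finset.mem_filter, orientedLabel]
  simp only [Finset.mem_univ, true_and, Equiv.refl_apply]
  split_ifs with h
  · simp [h.le]
  · rw [Option.some.injEq, fixedLabel_eq_none_iff, ne_comm]
    exact ⟨(not_lt.1 h).lt_of_ne, ne_of_lt⟩

lemma card_orientedLabel_some_some (x : WC n) (ε : ℤˣ) (p : ZMod 2) :
    #{i | orientedLabel x i = some (some (ε, p))} = #{i | fixedLabel x i = some (ε, p)} := by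
  refine Finset.card_equiv (.refl _) fun i => ?_
  rw [Finset.mem_filter, Finset.mem_filter, orientedLabel]
  simp only [Finset.mem_univ, true_and, Equiv.refl_apply]
  split_ifs with h
  · simp only [false_iff, fixedLabel_eq_some_iff]
    exact fun hp => h.ne hp.1
  · simp

lemma card_orientedLabel_eq {x y : WC n} (hx : x * x = 1) (hy : y * y = 1)
    (h : ∀ k, #{i | fixedLabel x i = k} = #{i | fixedLabel y i = k})
    (c : Option (Option (ℤˣ × ZMod 2))) :
    #{i | orientedLabel x i = c} = #{i | orientedLabel y i = c} := by
  have hm := h none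
  rw [card_fixedLabel_none hx, card_fixedLabel_none hy] at hm
  rcases c with _ | _ | ⟨ε, p⟩
  · rw [card_orientedLabel_none hx, card_orientedLabel_none hy]
    omega
  · rw [card_orientedLabel_some_none, card_orientedLabel_some_none]
    omega
  · rw [card_orientedLabel_some_some, card_orientedLabel_some_some, h]

lemma orientedLabel_eq_iff {x y : WC n} {i j : Fin n} :
    orientedLabel x j = orientedLabel y i ↔
      (perm x j < j ↔ perm y i < i) ∧ (¬perm y i < i → fixedLabel x j = fixedLabel y i) := by
  unfold orientedLabel
  split_ifs with h₁ h₂ h₂ <;> simp [h₁, h₂]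

/-- Conjugating by `x` and `y` swaps `x * g` and `g * y`, so for involutions their agreement at
`perm y i` implies agreement at `i`: it suffices to check the smaller point of each 2-cycle. -/
lemma mul_eq_mul_of_agreeAt {x y g : WC n} (hx : x * x = 1) (hy : y * y = 1)
    (h : ∀ i, ¬perm y i < i → AgreeAt (x * g) (g * y) i) : x * g = g * y := by
  have hpair : ∀ i, AgreeAt (x * g) (g * y) (perm y i) → AgreeAt (x * g) (g * y) i := by
    intro i hi
    have h' := hi.mul_mul x y
    rw [← mul_assoc, ← mul_assoc, hx, one_mul, mul_assoc, mul_assoc, hy, mul_one] at h'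
    exact h'.symm
  refine eq_of_forall_agreeAt fun i => ?_
  by_cases hi : perm y i < i
  · exact hpair i (h _ (by rw [perm_perm hy]; exact not_lt.2 hi.le))
  · exact h i hi

section Conjugator

variable (x y : WC n) (e : Fin n ≃ Fin n)

/-- The conjugator follows `e` at fixed points and at the smaller point of each 2-cycle of `y`;
at the larger point it is forced by `conjPerm (perm y i) = perm x (conjPerm i)`. -/
def conjPerm (i : Fin n) : Fin n := if perm y i < i then perm x (e (perm y i)) else e i

def conjSign (i : Fin n) : ℤˣ :=
  if perm y i < i then sign y (perm y i) * sign x (e (perm y i)) else 1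

def conjVec (i : Fin n) : ℤ :=
  if perm y i < i then 0
  else if perm y i = i then (y.vec i - x.vec (e i)) / 2 else y.vec i - x.vec (e i)

variable {x y e}

lemma lt_perm_iff_of_orientedLabel_eq (he : ∀ i, orientedLabel x (e i) = orientedLabel y i)
    (i : Fin n) : e i < perm x (e i) ↔ i < perm y i := by
  obtain ⟨hlt, hfix⟩ := orientedLabel_eq_iff.1 (he i)
  by_cases hi : perm y i < i
  · exact iff_of_false (not_lt.2 (hlt.2 hi).le) (not_lt.2 hi.le)
  · have hne : perm x (e i) ≠ e i ↔ perm y i ≠ i := by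
      rw [← fixedLabel_eq_none_iff, ← fixedLabel_eq_none_iff, hfix hi]
    rw [lt_iff_le_and_ne, lt_iff_le_and_ne, ← not_lt, ← not_lt, hlt, ne_comm, hne, ne_comm]

lemma perm_conjPerm_lt_iff (hx : x * x = 1) (hy : y * y = 1)
    (he : ∀ i, orientedLabel x (e i) = orientedLabel y i) (i : Fin n) :
    perm x (conjPerm x y e i) < conjPerm x y e i ↔ perm y i < i := by
  by_cases hi : perm y i < i
  · have hj := (lt_perm_iff_of_orientedLabel_eq he (perm y i)).2 (by rwa [perm_perm hy])
    rw [conjPerm, if_pos hi, perm_perm hx]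
    exact iff_of_true hj hi
  · simp only [conjPerm, if_neg hi, (orientedLabel_eq_iff.1 (he i)).1]

lemma conjPerm_injective (hx : x * x = 1) (hy : y * y = 1)
    (he : ∀ i, orientedLabel x (e i) = orientedLabel y i) :
    Function.Injective (conjPerm x y e) := by
  intro i j hij
  have key := perm_conjPerm_lt_iff hx hy he
  by_cases hi : perm y i < i <;> by_cases hj : perm y j < j
  · simp only [conjPerm, if_pos hi, if_pos hj] at hij
    exact (perm y).injective (e.injective ((perm x).injective hij))
  · exact absurd ((key j).1 (hij ▸ (key i).2 hi)) hj
  · exact absurd ((key i).1 (hij ▸ (key j).2 hj)) hi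
  · simp only [conjPerm, if_neg hi, if_neg hj] at hij
    exact e.injective hij

lemma agreeAt_conjugator (hx : x * x = 1) (hy : y * y = 1)
    (he : ∀ i, orientedLabel x (e i) = orientedLabel y i) {b : Equiv.Perm (Fin n)}
    (hb : ∀ i, b i = conjPerm x y e i) {i : Fin n} (hi : ¬perm y i < i) :
    AgreeAt (x * ⟨signedPerm (conjSign x y e) b, conjVec x y e⟩)
      (⟨signedPerm (conjSign x y e) b, conjVec x y e⟩ * y) i := by
  simp only [AgreeAt, sign_mul, perm_mul, vec_mul_apply, sign_mk, perm_mk, Equiv.Perm.mul_apply,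
    hb]
  rcases (not_lt.1 hi).lt_or_eq with hlt | heq
  · simp only [conjSign, conjPerm, conjVec, if_neg hi, perm_perm hy, if_pos hlt, if_neg hlt.ne']
    refine ⟨by rw [← mul_assoc, Int.units_mul_self, one_mul], trivial, by push_cast; ring⟩
  · rw [← heq]
    obtain ⟨hp, hs, hv⟩ := fixedLabel_eq_some_iff.1
      (((orientedLabel_eq_iff.1 (he i)).2 hi).trans (if_pos heq.symm))
    simp only [conjSign, conjPerm, conjVec, if_neg hi, if_pos heq.symm, hp, hs]
    refine ⟨by rw [one_mul, mul_one], trivial, ?_⟩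
    rcases Int.units_eq_one_or (sign y i) with hs₁ | hs₁
    · rw [vec_eq_zero_of_fixed hx hp (hs.trans hs₁), vec_eq_zero_of_fixed hy heq.symm hs₁]
      simp
    · have hd : Even (y.vec i - x.vec (e i)) := by
        rw [← ZMod.intCast_eq_zero_iff_even, Int.cast_sub, hv, sub_self]
      have h2 := Int.two_mul_ediv_two_of_even hd
      rw [hs₁]
      push_cast
      linarith

end Conjugator

theorem exists_mul_eq_mul_of_lct_eq {x y : WC n} (hx : x * x = 1) (hy : y * y = 1)
    (h : lct x = lct y) : ∃ g, x * g = g * y := by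
  obtain ⟨e, he⟩ := Equiv.exists_comp_eq_of_card_fiber_eq fun c =>
    (card_orientedLabel_eq hx hy (card_fixedLabel_eq_of_lct_eq hx hy h) c).symm
  exact ⟨⟨signedPerm (conjSign x y e)
      (Equiv.ofBijective _ (conjPerm_injective hx hy he).bijective_of_finite), conjVec x y e⟩,
    mul_eq_mul_of_agreeAt hx hy fun _ hi => agreeAt_conjugator hx hy he (fun _ => rfl) hi⟩

end WC

theorem Bbar_involutions_and_conjugacy (n : ℕ) :
    (∀ (x : WC n), orderOf x = 2 → ∀ m ke ko l : ℕ, lct x = (m, ke, ko, l) →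
      (x ∈ Bbar n ↔ Even ke)) ∧
    (∀ x x' : WC n, x ∈ Bbar n → x' ∈ Bbar n → orderOf x = 2 → orderOf x' = 2 →
      ∀ m ke ko l : ℕ, lct x = (m, ke, ko, l) → (0 < ke ∨ 0 < l) →
        ((∃ g ∈ Bbar n, g⁻¹ * x * g = x') ↔ lct x' = lct x)) := by
  refine ⟨fun x hx _ _ _ _ hlct => ?_, fun x x' _ _ hx hx' _ _ _ _ hlct hfix => ?_⟩
  · rw [WC.mem_Bbar_iff_even (mul_self_eq_one_of_orderOf_eq_two hx), hlct]
  have hx₂ := mul_self_eq_one_of_orderOf_eq_two hx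
  have hx₂' := mul_self_eq_one_of_orderOf_eq_two hx'
  constructor
  · rintro ⟨g, -, rfl⟩
    exact WC.lct_eq_of_mul_eq_mul (g := g) hx₂ hx₂' (by group)
  · intro h
    obtain ⟨g, hg⟩ := WC.exists_mul_eq_mul_of_lct_eq hx₂ hx₂' h.symm
    obtain ⟨c, hc, hcx⟩ := WC.exists_commute_parity_ne_one (x := x) (by rw [hlct]; exact hfix)
    rw [WC.Bbar_eq_ker]
    exact WC.parity.exists_mem_ker_conj_eq (by rw [mul_assoc, hg, inv_mul_cancel_left]) hc hcx
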